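/- Let p, q, K be integers with 1 ≤ q ≤ p and K ≥ 1. For 1 ≤ i ≤ K define D_i(x) = Σ_{l∈ℤ} sinc(π(i/K + l))^{p+1} exp(−2πi·x·(i + lK)), Q_{2p}(z) = Σ_{l∈ℤ} sinc(π(z + l))^{2p+2}, Q_{2p−2q}(z) = Σ_{l∈ℤ} sinc(π(z + l))^{2p−2q+2}, and φ_i(x) = D_i(x)/Q_{2p}(i/K)^{1/2}. Then for all 1 ≤ i, j ≤ K, ∫_0^1 φ_i^{(q)}(x) · conj(φ_j^{(q)}(x)) dx = μ_i δ_{ij}, where μ_i = (2πi)^{2q} · sinc(πi/K)^{2q} · Q_{2p−2q}(i/K) / Q_{2p}(i/K) (in μ_i, the factor (2πi)^{2q} uses the integer index i, not the imaginary unit). -/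

import Mathlib

/-!
With `e_m(x) = exp(-2πimx)`, `D_i = Σ_l c_l e_{i+lK}` where `c_l = sinc(π(i/K+l))^{p+1}` decays
like `|l|^{-p-1}`, so the series may be differentiated termwise `q - 1 ≤ p - 1` times. The
`q`-th termwise derivative need not converge absolutely (when `q = p`), but its coefficients are
square-summable, so it defines some `H_i ∈ L²(0,1)`. Pairing `H_i` with indicators of `(0,x]`
shows that `D_i^{(q-1)}` is an indefinite integral of `H_i`, so `D_i^{(q)} = H_i` almost
everywhere by Lebesgue's differentiation theorem. The frequencies `i + lK` of different `i` lie
in different residue classes mod `K`, hence the `H_i` are orthogonal, and Parseval gives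
`‖H_i‖² = Σ_l c_l² (2π(i+lK))^{2q}`. Since `sinc(πu) · πu = sin(πu)` and `sin²` is
`π`-periodic, this equals `(2πi)^{2q} sinc(πi/K)^{2q} Q_{2p-2q}(i/K)`. For `i = K` only
`l = -1` contributes, so `φ_K` is constant and `μ_K = 0`.
-/

open Real MeasureTheory ComplexConjugate

/-- `sinc x = sin x / x` for `x ≠ 0`, and `sinc 0 = 1`. -/
noncomputable def sinc (x : ℝ) : ℝ := if x = 0 then 1 else Real.sin x / x

/-- The `l`-th term of the sinc-series defining `D_i`. -/
noncomputable def Dterm (K p : ℕ) (i : ℕ) (x : ℝ) (l : ℤ) : ℂ :=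
  ((_root_.sinc (Real.pi * ((i : ℝ) / K + l)) ^ (p + 1) : ℝ) : ℂ) *
    Complex.exp (-2 * (Real.pi : ℂ) * Complex.I * (x : ℂ) * ((i : ℂ) + (l : ℂ) * (K : ℂ)))

/-- `D_i(x) = Σ_{l ∈ ℤ} sinc(π(i/K + l))^{p+1} exp(−2πi x (i + lK))`. -/
noncomputable def Dfun (K p : ℕ) (i : ℕ) (x : ℝ) : ℂ := ∑' l : ℤ, Dterm K p i x l

/-- `Q_n(z) = Σ_{l ∈ ℤ} sinc(π(z+l))^n` (here `n` is the power, so `Q_{2p}` of the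
paper is `Qs (2*p+2)` and `Q_{2p-2q}` is `Qs (2*p-2*q+2)`). -/
noncomputable def Qs (n : ℕ) (z : ℝ) : ℝ := ∑' l : ℤ, _root_.sinc (Real.pi * (z + l)) ^ n

/-- The L²-orthonormal Demmler–Reinsch basis function
`φ_i(x) = D_i(x)/Q_{2p}(i/K)^{1/2}`. -/
noncomputable def phiDR (K p : ℕ) (i : ℕ) (x : ℝ) : ℂ :=
  Dfun K p i x / ((Real.sqrt (Qs (2 * p + 2) ((i : ℝ) / K)) : ℝ) : ℂ)

/-- The eigenvalue `μ_i = (2πi)^{2q} sinc(πi/K)^{2q} Q_{2p−2q}(i/K)/Q_{2p}(i/K)`. -/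
noncomputable def muDR (K p q : ℕ) (i : ℕ) : ℝ :=
  (2 * Real.pi * i) ^ (2 * q) * _root_.sinc (Real.pi * i / K) ^ (2 * q) *
    Qs (2 * p - 2 * q + 2) ((i : ℝ) / K) / Qs (2 * p + 2) ((i : ℝ) / K)

lemma sinc_eq_real_sinc : _root_.sinc = Real.sinc := rfl

lemma summable_inv_one_add_abs_sq : Summable fun l : ℤ => ((1 + |(l : ℝ)|) ^ 2)⁻¹ := by
  have h : Summable fun n : ℕ => ((1 + (n : ℝ)) ^ 2)⁻¹ := by
    simpa [add_comm] using (summable_nat_add_iff 1).2 (Real.summable_nat_pow_inv.2 one_lt_two)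
  exact .of_nat_of_neg (by simpa using h) (by simpa using h)

namespace Real

lemma sinc_mul_eq_sin (x : ℝ) : Real.sinc x * x = Real.sin x := by
  rcases eq_or_ne x 0 with rfl | hx
  · simp
  · rw [Real.sinc_of_ne_zero hx, div_mul_cancel₀ _ hx]

lemma abs_sinc_le_inv_abs {x : ℝ} (hx : x ≠ 0) : |Real.sinc x| ≤ |x|⁻¹ := by
  rw [Real.sinc_of_ne_zero hx, abs_div, div_eq_mul_inv]
  exact mul_le_of_le_one_left (by positivity) (Real.abs_sin_le_one x)

lemma sinc_pi_mul_intCast {n : ℤ} (hn : n ≠ 0) : Real.sinc (π * n) = 0 := by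
  rw [Real.sinc_of_ne_zero (mul_ne_zero Real.pi_ne_zero (Int.cast_ne_zero.2 hn)), mul_comm,
    Real.sin_int_mul_pi, zero_div]

lemma sin_sq_pi_mul_add_intCast (x : ℝ) (n : ℤ) :
    Real.sin (π * (x + n)) ^ 2 = Real.sin (π * x) ^ 2 := by
  rw [mul_add, mul_comm π n, Real.sin_add_int_mul_pi, mul_pow, ← sq_abs ((-1 : ℝ) ^ n),
    abs_zpow, abs_neg, abs_one, one_zpow, one_pow, one_mul]

lemma abs_sinc_pi_mul_pow_mul_le (u : ℝ) {P t : ℕ} (h : t + 2 ≤ P) :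
    |Real.sinc (π * u)| ^ P * |u| ^ t ≤ 4 / (1 + |u|) ^ 2 := by
  rcases lt_or_ge |u| 1 with hu | hu
  · calc |Real.sinc (π * u)| ^ P * |u| ^ t ≤ 1 * 1 := by
          gcongr
          · exact pow_le_one₀ (abs_nonneg _) (Real.abs_sinc_le_one _)
          · exact pow_le_one₀ (abs_nonneg _) hu.le
      _ ≤ 4 / (1 + |u|) ^ 2 := by
          rw [le_div_iff₀ (by positivity)]
          nlinarith [abs_nonneg u]
  · have hu0 : 0 < |u| := by linarith
    have hsinc : |Real.sinc (π * u)| ≤ |u|⁻¹ := by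
      refine (abs_sinc_le_inv_abs (mul_ne_zero Real.pi_ne_zero (abs_pos.1 hu0))).trans ?_
      rw [abs_mul, abs_of_pos Real.pi_pos]
      gcongr
      nlinarith [Real.pi_gt_three]
    calc |Real.sinc (π * u)| ^ P * |u| ^ t ≤ (|u|⁻¹) ^ P * |u| ^ t := by gcongr
      _ ≤ (|u|⁻¹) ^ (t + 2) * |u| ^ t :=
          mul_le_mul_of_nonneg_right (pow_le_pow_of_le_one (by positivity)
            (inv_le_one_of_one_le₀ hu) h) (by positivity)
      _ = 1 / |u| ^ 2 := by rw [inv_pow, pow_add]; field_simp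
      _ ≤ 4 / (1 + |u|) ^ 2 := by
          rw [div_le_div_iff₀ (by positivity) (by positivity)]
          nlinarith

lemma summable_abs_sinc_pow_mul_abs_pow (z : ℝ) {P t : ℕ} (h : t + 2 ≤ P) :
    Summable fun l : ℤ => |Real.sinc (π * (z + l))| ^ P * |z + l| ^ t := by
  refine .of_nonneg_of_le (fun _ => by positivity) (fun l => ?_)
    (summable_inv_one_add_abs_sq.mul_left (4 * (1 + |z|) ^ 2))
  refine (abs_sinc_pi_mul_pow_mul_le _ h).trans ?_
  have hl : 1 + |(l : ℝ)| ≤ (1 + |z|) * (1 + |z + l|) := by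
    have := abs_sub (z + l) z
    rw [add_sub_cancel_left] at this
    nlinarith [abs_nonneg z, abs_nonneg (z + l)]
  rw [mul_assoc, ← div_eq_mul_inv, mul_div_assoc',
    div_le_div_iff₀ (by positivity) (by positivity)]
  have := pow_le_pow_left₀ (by positivity) hl 2
  rw [mul_pow] at this
  nlinarith

end Real

lemma Qs_pos {n : ℕ} (hn : 2 ≤ n) (he : Even n) {z : ℝ} (hz0 : 0 < z) (hz1 : z < 1) :
    0 < Qs n z := by
  have hs : Summable fun l : ℤ => Real.sinc (π * (z + l)) ^ n := by
    simpa [he.pow_abs] using summable_abs_sinc_pow_mul_abs_pow z (t := 0) hn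
  have h0 : 0 < Real.sinc (π * z) := by
    rw [Real.sinc_of_ne_zero (by positivity)]
    exact div_pos (Real.sin_pos_of_pos_of_lt_pi (by positivity) (by nlinarith [Real.pi_pos]))
      (by positivity)
  refine lt_of_lt_of_le ?_ (hs.le_tsum 0 fun l _ => he.pow_nonneg _)
  simpa using pow_pos h0 n

noncomputable def modeRate (m : ℤ) : ℂ := -2 * π * Complex.I * m

noncomputable def fourierMode (m : ℤ) (x : ℝ) : ℂ := Complex.exp (modeRate m * x)

lemma modeRate_ne_zero {m : ℤ} (hm : m ≠ 0) : modeRate m ≠ 0 := by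
  simp [modeRate, Real.pi_ne_zero, hm]

lemma norm_modeRate (m : ℤ) : ‖modeRate m‖ = 2 * π * |(m : ℝ)| := by
  simp [modeRate, abs_of_pos Real.pi_pos]

lemma hasDerivAt_fourierMode (m : ℤ) (x : ℝ) :
    HasDerivAt (fourierMode m) (modeRate m * fourierMode m x) x := by
  have h := ((hasDerivAt_id (x : ℂ)).const_mul (modeRate m)).cexp.comp_ofReal
  simp only [id, mul_one] at h
  rwa [mul_comm] at h

lemma norm_fourierMode (m : ℤ) (x : ℝ) : ‖fourierMode m x‖ = 1 := by
  rw [fourierMode, show modeRate m * x = ((-2 * π * m * x : ℝ) : ℂ) * Complex.I by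
    simp only [modeRate]; push_cast; ring, Complex.norm_exp_ofReal_mul_I]

lemma conj_fourierMode (m : ℤ) (x : ℝ) : conj (fourierMode m x) = fourierMode (-m) x := by
  rw [fourierMode, fourierMode, ← Complex.exp_conj]
  simp [modeRate, map_ofNat]

lemma fourierMode_mul (a b : ℤ) (x : ℝ) :
    fourierMode a x * fourierMode b x = fourierMode (a + b) x := by
  rw [fourierMode, fourierMode, fourierMode, ← Complex.exp_add]
  simp only [modeRate]
  push_cast
  ring_nf

lemma fourierMode_apply_zero (m : ℤ) : fourierMode m 0 = 1 := by simp [fourierMode]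

lemma fourierMode_apply_one (m : ℤ) : fourierMode m 1 = 1 := by
  rw [fourierMode, show modeRate m * ((1 : ℝ) : ℂ) = (-m : ℤ) * (2 * π * Complex.I) by
    simp only [modeRate]; push_cast; ring, Complex.exp_int_mul_two_pi_mul_I]

lemma continuous_fourierMode (m : ℤ) : Continuous (fourierMode m) := by
  unfold fourierMode
  fun_prop

lemma integral_fourierMode {m : ℤ} (hm : m ≠ 0) (x : ℝ) :
    ∫ t in (0 : ℝ)..x, fourierMode m t = (fourierMode m x - 1) / modeRate m := by
  simp [fourierMode, integral_exp_mul_complex (modeRate_ne_zero hm)]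

lemma integral_fourierMode_zero_one (m : ℤ) :
    ∫ t in (0 : ℝ)..1, fourierMode m t = if m = 0 then 1 else 0 := by
  split_ifs with hm
  · simp [hm, fourierMode, modeRate]
  · rw [integral_fourierMode hm, fourierMode_apply_one, sub_self, zero_div]

local notation "μ₀₁" => volume.restrict (Set.Ioc (0 : ℝ) 1)

lemma memLp_fourierMode (m : ℤ) : MemLp (fourierMode m) 2 μ₀₁ :=
  .of_bound (continuous_fourierMode m).aestronglyMeasurable 1
    (.of_forall fun x => (norm_fourierMode m x).le)

noncomputable def modeLp (m : ℤ) : Lp ℂ 2 μ₀₁ := (memLp_fourierMode m).toLp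

lemma coeFn_modeLp (m : ℤ) : modeLp m =ᵐ[μ₀₁] fourierMode m :=
  (memLp_fourierMode m).coeFn_toLp

lemma intervalIntegral_congr_of_ae_Ioc {f g : ℝ → ℂ} (h : f =ᵐ[μ₀₁] g) {x : ℝ}
    (hx : x ∈ Set.Icc (0 : ℝ) 1) : ∫ t in (0 : ℝ)..x, f t = ∫ t in (0 : ℝ)..x, g t := by
  refine intervalIntegral.integral_congr_ae ?_
  filter_upwards [(ae_restrict_iff' measurableSet_Ioc).1 h] with t ht htx
  rw [Set.uIoc_of_le hx.1] at htx
  exact ht ⟨htx.1, htx.2.trans hx.2⟩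

lemma integral_mul_conj_eq_inner (f g : Lp ℂ 2 μ₀₁) :
    ∫ x in (0 : ℝ)..1, f x * conj (g x) = inner ℂ g f := by
  rw [L2.inner_def, intervalIntegral.integral_of_le zero_le_one]
  simp

lemma integral_mul_conj_eq_of_ae {f g : ℝ → ℂ} {F G : Lp ℂ 2 μ₀₁} {a b : ℂ}
    (hf : ∀ᵐ x, x ∈ Set.Ioo (0 : ℝ) 1 → f x = a * F x)
    (hg : ∀ᵐ x, x ∈ Set.Ioo (0 : ℝ) 1 → g x = b * G x) :
    ∫ x in (0 : ℝ)..1, f x * conj (g x) = a * conj b * inner ℂ G F := by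
  have hfg : ∫ x in (0 : ℝ)..1, f x * conj (g x) =
      ∫ x in (0 : ℝ)..1, a * F x * conj (b * G x) := by
    simp only [intervalIntegral.integral_of_le zero_le_one, integral_Ioc_eq_integral_Ioo]
    refine setIntegral_congr_ae measurableSet_Ioo ?_
    filter_upwards [hf, hg] with x hfx hgx hx
    rw [hfx hx, hgx hx]
  have hmul (x : ℝ) : a * F x * conj (b * G x) = a * conj b * (F x * conj (G x)) := by
    rw [map_mul]; ring
  rw [hfg, intervalIntegral.integral_congr fun x _ => hmul x, intervalIntegral.integral_const_mul,
    integral_mul_conj_eq_inner]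

lemma inner_modeLp (m n : ℤ) : inner ℂ (modeLp m) (modeLp n) = if m = n then 1 else 0 := by
  have h : ∀ᵐ x ∂μ₀₁, inner ℂ (modeLp m x) (modeLp n x) = fourierMode (n - m) x := by
    filter_upwards [coeFn_modeLp m, coeFn_modeLp n] with x hm hn
    rw [hm, hn, RCLike.inner_apply, conj_fourierMode, fourierMode_mul,
      ← sub_eq_add_neg]
  rw [L2.inner_def, integral_congr_ae h, ← intervalIntegral.integral_of_le zero_le_one,
    integral_fourierMode_zero_one]
  simp only [sub_eq_zero, eq_comm]

lemma orthonormal_modeLp : Orthonormal ℂ modeLp := orthonormal_iff_ite.2 inner_modeLp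

section ModeSeries

variable (c : ℤ → ℂ) (v : ℤ → ℤ)

noncomputable def modeSeries (x : ℝ) : ℂ := ∑' l, c l * fourierMode (v l) x

noncomputable def modeSeriesLp : Lp ℂ 2 μ₀₁ := ∑' l, c l • modeLp (v l)

variable {c v}

lemma summable_smul_modeLp (hv : Function.Injective v) (hc : Summable fun l => ‖c l‖ ^ 2) :
    Summable fun l => c l • modeLp (v l) :=
  ((orthonormal_modeLp.comp v hv).orthogonalFamily.summable_iff_norm_sq_summable c).2
    (by simpa using hc)

lemma inner_modeSeriesLp_right (hv : Function.Injective v) (hc : Summable fun l => ‖c l‖ ^ 2)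
    (f : Lp ℂ 2 μ₀₁) :
    inner ℂ f (modeSeriesLp c v) = ∑' l, c l * inner ℂ f (modeLp (v l)) := by
  simpa [modeSeriesLp, inner_smul_right] using
    (innerSL ℂ f).map_tsum (summable_smul_modeLp hv hc)

lemma inner_modeLp_modeSeriesLp (hv : Function.Injective v) (hc : Summable fun l => ‖c l‖ ^ 2)
    (l : ℤ) : inner ℂ (modeLp (v l)) (modeSeriesLp c v) = c l := by
  rw [inner_modeSeriesLp_right hv hc, tsum_eq_single l fun l' hl' => by
    rw [inner_modeLp, if_neg (hv.ne hl'.symm), mul_zero]]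
  rw [inner_modeLp, if_pos rfl, mul_one]

lemma inner_modeSeriesLp_self (hv : Function.Injective v) (hc : Summable fun l => ‖c l‖ ^ 2) :
    inner ℂ (modeSeriesLp c v) (modeSeriesLp c v) = ((∑' l, ‖c l‖ ^ 2 : ℝ) : ℂ) := by
  rw [inner_modeSeriesLp_right hv hc, Complex.ofReal_tsum]
  refine tsum_congr fun l => ?_
  rw [← inner_conj_symm, inner_modeLp_modeSeriesLp hv hc, RCLike.mul_conj]
  norm_cast

lemma inner_modeLp_modeSeriesLp_of_forall_ne (hv : Function.Injective v)
    (hc : Summable fun l => ‖c l‖ ^ 2) {m : ℤ} (hm : ∀ l, v l ≠ m) :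
    inner ℂ (modeLp m) (modeSeriesLp c v) = 0 := by
  simp [inner_modeSeriesLp_right hv hc, inner_modeLp, Ne.symm (hm _)]

lemma inner_modeSeriesLp_of_disjoint {c' : ℤ → ℂ} {v' : ℤ → ℤ}
    (hv : Function.Injective v) (hc : Summable fun l => ‖c l‖ ^ 2) (hv' : Function.Injective v')
    (hc' : Summable fun l => ‖c' l‖ ^ 2) (h : ∀ l l', v l ≠ v' l') :
    inner ℂ (modeSeriesLp c v) (modeSeriesLp c' v') = 0 := by
  rw [inner_modeSeriesLp_right hv' hc']
  refine (tsum_congr fun l' => ?_).trans tsum_zero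
  rw [← inner_conj_symm, inner_modeLp_modeSeriesLp_of_forall_ne hv hc (fun l => h l l'),
    map_zero, mul_zero]

lemma summable_mul_fourierMode (hc : Summable fun l => ‖c l‖) (x : ℝ) :
    Summable fun l => c l * fourierMode (v l) x :=
  .of_norm_bounded hc fun l => by rw [norm_mul, norm_fourierMode, mul_one]

lemma hasDerivAt_modeSeries (hc : Summable fun l => ‖c l‖)
    (hc' : Summable fun l => ‖c l * modeRate (v l)‖) (x : ℝ) :
    HasDerivAt (modeSeries c v) (modeSeries (fun l => c l * modeRate (v l)) v x) x := by
  have hd : ∀ l y, HasDerivAt (fun y => c l * fourierMode (v l) y)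
      (c l * modeRate (v l) * fourierMode (v l) y) y := fun l y => by
    simpa [mul_assoc] using (hasDerivAt_fourierMode (v l) y).const_mul (c l)
  exact hasDerivAt_tsum hc' hd (fun l y => by rw [norm_mul, norm_fourierMode, mul_one])
    (summable_mul_fourierMode hc 0) x

lemma iteratedDeriv_modeSeries {s : ℕ}
    (hc : ∀ k ≤ s, Summable fun l => ‖c l * modeRate (v l) ^ k‖) :
    iteratedDeriv s (modeSeries c v) = modeSeries (fun l => c l * modeRate (v l) ^ s) v := by
  induction s with
  | zero => simp
  | succ s ih =>
    rw [iteratedDeriv_succ, ih fun k hk => hc k (by omega)]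
    funext x
    refine (hasDerivAt_modeSeries (hc s (by omega)) ?_ x).deriv.trans ?_
    · simpa [pow_succ, mul_assoc] using hc (s + 1) le_rfl
    · simp [pow_succ, mul_assoc]

lemma modeSeries_eq_add_integral (hv : Function.Injective v) (hv0 : ∀ l, v l ≠ 0)
    (hc : Summable fun l => ‖c l‖) (hc' : Summable fun l => ‖c l * modeRate (v l)‖ ^ 2)
    {x : ℝ} (hx : x ∈ Set.Icc (0 : ℝ) 1) :
    modeSeries c v x = modeSeries c v 0 +
      ∫ t in (0 : ℝ)..x, modeSeriesLp (fun l => c l * modeRate (v l)) v t := by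
  -- `∫₀ˣ H` is the pairing of `H` with the indicator of `(0, x]`, evaluated term by term.
  set χ := indicatorConstLp 2 (measurableSet_Ioc (a := 0) (b := x)) (measure_ne_top μ₀₁ _)
    (1 : ℂ)
  have hχ (f : Lp ℂ 2 μ₀₁) : inner ℂ χ f = ∫ t in (0 : ℝ)..x, f t := by
    rw [L2.inner_indicatorConstLp_one, Measure.restrict_restrict measurableSet_Ioc,
      Set.inter_eq_self_of_subset_left (Set.Ioc_subset_Ioc_right hx.2),
      intervalIntegral.integral_of_le hx.1]
  have hχ_mode (l : ℤ) :
      inner ℂ χ (modeLp (v l)) = (fourierMode (v l) x - 1) / modeRate (v l) := by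
    rw [hχ, intervalIntegral_congr_of_ae_Ioc (coeFn_modeLp _) hx,
      integral_fourierMode (hv0 l)]
  have hterm (l : ℤ) : c l * modeRate (v l) * inner ℂ χ (modeLp (v l)) =
      c l * fourierMode (v l) x - c l * fourierMode (v l) 0 := by
    rw [hχ_mode, fourierMode_apply_zero]
    field_simp [modeRate_ne_zero (hv0 l)]
  rw [← hχ, inner_modeSeriesLp_right hv hc', tsum_congr hterm,
    (summable_mul_fourierMode hc x).tsum_sub (summable_mul_fourierMode hc 0), modeSeries,
    modeSeries]
  ring

lemma ae_iteratedDeriv_modeSeries_eq (hv : Function.Injective v) (hv0 : ∀ l, v l ≠ 0) {q : ℕ}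
    (hc : ∀ k ≤ q, Summable fun l => ‖c l * modeRate (v l) ^ k‖)
    (hc' : Summable fun l => ‖c l * modeRate (v l) ^ (q + 1)‖ ^ 2) :
    ∀ᵐ x, x ∈ Set.Ioo (0 : ℝ) 1 → iteratedDeriv (q + 1) (modeSeries c v) x =
      modeSeriesLp (fun l => c l * modeRate (v l) ^ (q + 1)) v x := by
  set H := modeSeriesLp (fun l => c l * modeRate (v l) ^ (q + 1)) v
  have hH : IntervalIntegrable H volume 0 1 :=
    (intervalIntegrable_iff_integrableOn_Ioc_of_le zero_le_one).2
      ((Lp.memLp H).integrable one_le_two)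
  filter_upwards [hH.ae_hasDerivAt_integral] with x hx hxI
  have hG : modeSeries (fun l => c l * modeRate (v l) ^ q) v =ᶠ[nhds x]
      fun y => modeSeries (fun l => c l * modeRate (v l) ^ q) v 0 + ∫ t in (0 : ℝ)..y, H t := by
    filter_upwards [isOpen_Ioo.mem_nhds hxI] with y hy
    simpa [H, pow_succ, mul_assoc] using modeSeries_eq_add_integral hv hv0 (hc q le_rfl)
      (by simpa [pow_succ, mul_assoc] using hc') (Set.Ioo_subset_Icc_self hy)
  rw [iteratedDeriv_succ, iteratedDeriv_modeSeries hc]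
  rw [Set.uIcc_of_le zero_le_one] at hx
  exact (((hx (Set.Ioo_subset_Icc_self hxI) 0 (by simp)).const_add _).congr_of_eventuallyEq
    hG).deriv

end ModeSeries

section DemmlerReinsch

variable (K p q i : ℕ)

noncomputable def drCoeff (l : ℤ) : ℂ := (Real.sinc (π * ((i : ℝ) / K + l)) ^ (p + 1) : ℝ)

def drFreq (l : ℤ) : ℤ := i + l * K

/-- `H_i`: the termwise `q`-th derivative of `Dfun K p i`, summed in `L²`. -/
noncomputable def drDerivLp : Lp ℂ 2 μ₀₁ :=
  modeSeriesLp (fun l => drCoeff K p i l * modeRate (drFreq K i l) ^ q) (drFreq K i)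

variable {K p q i}

lemma Dfun_eq_modeSeries : Dfun K p i = modeSeries (drCoeff K p i) (drFreq K i) := by
  funext x
  refine tsum_congr fun l => ?_
  simp only [Dterm, drCoeff, drFreq, fourierMode, modeRate]
  congr 2
  push_cast
  ring

lemma drFreq_injective (hK : K ≠ 0) : Function.Injective (drFreq K i) := fun a b h => by
  simpa [drFreq, hK] using h

lemma drFreq_emod (hiK : i < K) (l : ℤ) : drFreq K i l % K = i := by
  rw [drFreq, Int.add_mul_emod_self_right]
  exact Int.emod_eq_of_lt (by positivity) (by exact_mod_cast hiK)

lemma drFreq_ne_zero (hi : 1 ≤ i) (hiK : i < K) (l : ℤ) : drFreq K i l ≠ 0 := fun h => by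
  have := drFreq_emod hiK l
  rw [h, Int.zero_emod] at this
  omega

lemma drFreq_ne_drFreq {j : ℕ} (hiK : i < K) (hjK : j < K) (hij : i ≠ j) (l l' : ℤ) :
    drFreq K i l ≠ drFreq K j l' := fun h => by
  have := drFreq_emod hiK l
  rw [h, drFreq_emod hjK] at this
  omega

lemma drFreq_cast (hK : K ≠ 0) (l : ℤ) : (drFreq K i l : ℝ) = K * ((i : ℝ) / K + l) := by
  simp only [drFreq]
  push_cast
  field_simp

lemma norm_drCoeff_mul_modeRate_pow (hK : K ≠ 0) (k : ℕ) (l : ℤ) :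
    ‖drCoeff K p i l * modeRate (drFreq K i l) ^ k‖ =
      (2 * π * K) ^ k *
        (|Real.sinc (π * ((i : ℝ) / K + l))| ^ (p + 1) * |(i : ℝ) / K + l| ^ k) := by
  rw [norm_mul, norm_pow, norm_modeRate, drFreq_cast hK, drCoeff, Complex.norm_real,
    Real.norm_eq_abs, abs_pow, abs_mul, Nat.abs_cast]
  ring

lemma summable_drCoeff_mul_modeRate_pow (hK : K ≠ 0) {k : ℕ} (hk : k + 1 ≤ p) :
    Summable fun l => ‖drCoeff K p i l * modeRate (drFreq K i l) ^ k‖ := by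
  simp_rw [norm_drCoeff_mul_modeRate_pow hK]
  exact (summable_abs_sinc_pow_mul_abs_pow _ (by omega)).mul_left _

lemma summable_drCoeff_mul_modeRate_pow_sq (hK : K ≠ 0) (hqp : q ≤ p) :
    Summable fun l => ‖drCoeff K p i l * modeRate (drFreq K i l) ^ q‖ ^ 2 := by
  simp_rw [norm_drCoeff_mul_modeRate_pow hK, mul_pow, ← pow_mul]
  exact (summable_abs_sinc_pow_mul_abs_pow _ (by omega)).mul_left _

lemma norm_drCoeff_mul_modeRate_pow_sq (hK : K ≠ 0) (hqp : q ≤ p) (l : ℤ) :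
    ‖drCoeff K p i l * modeRate (drFreq K i l) ^ q‖ ^ 2 =
      (2 * π * i * Real.sinc (π * i / K)) ^ (2 * q) *
        Real.sinc (π * ((i : ℝ) / K + l)) ^ (2 * p - 2 * q + 2) := by
  have hsin : (Real.sinc (π * ((i : ℝ) / K + l)) * (π * ((i : ℝ) / K + l))) ^ 2 =
      (Real.sinc (π * i / K) * (π * i / K)) ^ 2 := by
    rw [sinc_mul_eq_sin, sin_sq_pi_mul_add_intCast, mul_div_assoc, sinc_mul_eq_sin]
  have habs (x : ℝ) (n : ℕ) : (|x| ^ n) ^ 2 = (x ^ 2) ^ n := by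
    rw [← pow_mul, mul_comm, pow_mul, sq_abs]
  rw [norm_drCoeff_mul_modeRate_pow hK, mul_pow ((2 * π * K) ^ q), mul_pow (|_| ^ (p + 1)), habs,
    habs]
  generalize Real.sinc (π * ((i : ℝ) / K + l)) = s at hsin ⊢
  generalize (i : ℝ) / K + l = u at hsin ⊢
  obtain ⟨r, rfl⟩ : ∃ r, p = q + r := ⟨p - q, by omega⟩
  calc ((2 * π * K) ^ q) ^ 2 * ((s ^ 2) ^ (q + r + 1) * (u ^ 2) ^ q)
      = (2 * K) ^ (2 * q) * ((s * (π * u)) ^ 2) ^ q * s ^ (2 * r + 2) := by ring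
    _ = _ := by
        rw [hsin, ← pow_mul, ← mul_pow, show 2 * (q + r) - 2 * q + 2 = 2 * r + 2 by omega]
        congr 2
        field_simp

lemma ae_iteratedDeriv_Dfun_eq (hK : K ≠ 0) (hq : 1 ≤ q) (hqp : q ≤ p) (hi : 1 ≤ i)
    (hiK : i < K) :
    ∀ᵐ x, x ∈ Set.Ioo (0 : ℝ) 1 →
      iteratedDeriv q (Dfun K p i) x = drDerivLp K p q i x := by
  obtain ⟨q, rfl⟩ : ∃ q', q = q' + 1 := ⟨q - 1, by omega⟩
  rw [Dfun_eq_modeSeries]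
  exact ae_iteratedDeriv_modeSeries_eq (drFreq_injective hK) (drFreq_ne_zero hi hiK)
    (fun k hk => summable_drCoeff_mul_modeRate_pow hK (by omega))
    (summable_drCoeff_mul_modeRate_pow_sq hK hqp)

lemma ae_iteratedDeriv_phiDR_eq (hK : K ≠ 0) (hq : 1 ≤ q) (hqp : q ≤ p) (hi : 1 ≤ i)
    (hiK : i < K) :
    ∀ᵐ x, x ∈ Set.Ioo (0 : ℝ) 1 → iteratedDeriv q (phiDR K p i) x =
      ((√(Qs (2 * p + 2) ((i : ℝ) / K)) : ℝ) : ℂ)⁻¹ * drDerivLp K p q i x := by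
  filter_upwards [ae_iteratedDeriv_Dfun_eq hK hq hqp hi hiK] with x hx hxI
  change iteratedDeriv q (fun y => Dfun K p i y / _) x = _
  rw [iteratedDeriv_div_const, hx hxI, div_eq_inv_mul]

lemma inner_drDerivLp_self (hK : K ≠ 0) (hqp : q ≤ p) :
    inner ℂ (drDerivLp K p q i) (drDerivLp K p q i) =
      (((2 * π * i) ^ (2 * q) * Real.sinc (π * i / K) ^ (2 * q) *
        Qs (2 * p - 2 * q + 2) ((i : ℝ) / K) : ℝ) : ℂ) := by
  rw [drDerivLp, inner_modeSeriesLp_self (drFreq_injective hK)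
    (summable_drCoeff_mul_modeRate_pow_sq hK hqp)]
  simp_rw [norm_drCoeff_mul_modeRate_pow_sq hK hqp, tsum_mul_left, mul_pow]
  rfl

lemma inner_drDerivLp_of_ne {j : ℕ} (hK : K ≠ 0) (hqp : q ≤ p) (hiK : i < K) (hjK : j < K)
    (hij : i ≠ j) : inner ℂ (drDerivLp K p q i) (drDerivLp K p q j) = 0 :=
  inner_modeSeriesLp_of_disjoint (drFreq_injective hK)
    (summable_drCoeff_mul_modeRate_pow_sq hK hqp) (drFreq_injective hK)
    (summable_drCoeff_mul_modeRate_pow_sq hK hqp) (drFreq_ne_drFreq hiK hjK hij)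

lemma Dfun_self (hK : K ≠ 0) (x : ℝ) : Dfun K p K x = 1 := by
  have hKK : (K : ℝ) / K = 1 := div_self (by positivity)
  rw [Dfun, tsum_eq_single (-1) fun l hl => ?_]
  · simp [Dterm, hKK, sinc_eq_real_sinc]
  · have h : (K : ℝ) / K + l = ((1 + l : ℤ) : ℝ) := by push_cast; rw [hKK]
    simp only [Dterm, sinc_eq_real_sinc]
    rw [h, sinc_pi_mul_intCast (by omega)]
    simp

lemma iteratedDeriv_phiDR_self (hK : K ≠ 0) (hq : 1 ≤ q) (x : ℝ) :
    iteratedDeriv q (phiDR K p K) x = 0 := by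
  change iteratedDeriv q (fun y => Dfun K p K y / _) x = 0
  simp only [Dfun_self hK, iteratedDeriv_const, if_neg (show q ≠ 0 by omega)]

lemma muDR_self (hK : K ≠ 0) (hq : 1 ≤ q) : muDR K p q K = 0 := by
  have h : π * K / K = π * ((1 : ℤ) : ℝ) := by field_simp; simp
  rw [muDR, sinc_eq_real_sinc, h, sinc_pi_mul_intCast one_ne_zero, zero_pow (by omega), mul_zero,
    zero_mul, zero_div]

end DemmlerReinsch

theorem stmt4 (p q K : ℕ) (hq : 1 ≤ q) (hqp : q ≤ p) (hK : 1 ≤ K) :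
    ∀ i j, 1 ≤ i → i ≤ K → 1 ≤ j → j ≤ K →
      (∫ x in (0:ℝ)..1,
          iteratedDeriv q (phiDR K p i) x * conj (iteratedDeriv q (phiDR K p j) x)) =
        if i = j then ((muDR K p q i : ℝ) : ℂ) else 0 := by
  intro i j hi hiK hj hjK
  have hK0 : K ≠ 0 := by omega
  rcases hiK.eq_or_lt with rfl | hiK
  · simp [iteratedDeriv_phiDR_self hK0 hq, muDR_self hK0 hq]
  rcases hjK.eq_or_lt with rfl | hjK
  · simp [iteratedDeriv_phiDR_self hK0 hq, hiK.ne]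
  rw [integral_mul_conj_eq_of_ae (ae_iteratedDeriv_phiDR_eq hK0 hq hqp hi hiK)
    (ae_iteratedDeriv_phiDR_eq hK0 hq hqp hj hjK)]
  split_ifs with hij
  · subst hij
    have hQ : 0 < Qs (2 * p + 2) ((i : ℝ) / K) :=
      Qs_pos (by omega) ⟨p + 1, by ring⟩ (by positivity)
        ((div_lt_one (by positivity)).2 (by exact_mod_cast hiK))
    have hsqrt : ((√(Qs (2 * p + 2) ((i : ℝ) / K)) : ℝ) : ℂ)⁻¹ *
        conj ((√(Qs (2 * p + 2) ((i : ℝ) / K)) : ℝ) : ℂ)⁻¹ =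
        ((Qs (2 * p + 2) ((i : ℝ) / K) : ℝ) : ℂ)⁻¹ := by
      rw [map_inv₀, Complex.conj_ofReal, ← mul_inv, ← Complex.ofReal_mul,
        Real.mul_self_sqrt hQ.le]
    rw [hsqrt, inner_drDerivLp_self hK0 hqp, muDR, sinc_eq_real_sinc, Complex.ofReal_div,
      inv_mul_eq_div]
  · rw [inner_drDerivLp_of_ne hK0 hqp hjK hiK (Ne.symm hij), mul_zero]
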